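/- arXiv:1705.01117 — 3 statements merged into one kernel-verified Lean document; each statement's English description precedes it below -/
import Mathlib

section
/- Let (C,∂) be a finitely generated free chain complex over R = F₂[U,V,U⁻¹,V⁻¹] with basis B. Then the formal derivative Φ_B of ∂ with respect to U is a chain map: Φ_B ∘ ∂ + ∂ ∘ Φ_B = 0. -/
open Finsupp

noncomputable section

abbrev F2 : Type := ZMod 2

/-- The Laurent polynomial ring `F₂[U,V,U⁻¹,V⁻¹]`, realized as the monoid algebra
of `ℤ × ℤ` over `F₂`; `U` corresponds to `(1,0)` and `V` to `(0,1)`. -/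
abbrev R2 : Type := AddMonoidAlgebra F2 (ℤ × ℤ)

/-- Formal derivative of a Laurent polynomial with respect to `U`. -/
def dU (f : R2) : R2 :=
  Finsupp.sum f.coeff fun mn c => AddMonoidAlgebra.single (mn.1 - 1, mn.2) ((mn.1 : F2) * c)

/-- Formal derivative of a Laurent polynomial with respect to `V`. -/
def dV (f : R2) : R2 :=
  Finsupp.sum f.coeff fun mn c => AddMonoidAlgebra.single (mn.1, mn.2 - 1) ((mn.2 : F2) * c)

/-- The `R2`-linear map `(B →₀ R2) →ₗ (B' →₀ R2)` determined by its values on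
the standard basis. -/
def bmap {B B' : Type} (v : B → (B' →₀ R2)) : (B →₀ R2) →ₗ[R2] (B' →₀ R2) :=
  Finsupp.lsum R2 fun x => LinearMap.toSpanSingleton R2 _ (v x)

/-- The matrix entry `P_{x y}` of a linear map with respect to the standard bases. -/
def matOf {B B' : Type} (f : (B →₀ R2) →ₗ[R2] (B' →₀ R2)) (x : B) (y : B') : R2 :=
  f (Finsupp.single x 1) y

/-- Apply `g : R2 → R2` to each matrix entry of `f`. -/
def entrywise {B B' : Type} [Finite B'] (g : R2 → R2)
    (f : (B →₀ R2) →ₗ[R2] (B' →₀ R2)) : (B →₀ R2) →ₗ[R2] (B' →₀ R2) :=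
  bmap fun x => Finsupp.equivFunOnFinite.symm fun y => g (matOf f x y)

/-- `Φ_B`, the formal derivative of the differential with respect to `U`. -/
def PhiB {B : Type} [Finite B] (d : (B →₀ R2) →ₗ[R2] (B →₀ R2)) :
    (B →₀ R2) →ₗ[R2] (B →₀ R2) :=
  entrywise dU d

/-- `Ψ_B`, the formal derivative of the differential with respect to `V`. -/
def PsiB {B : Type} [Finite B] (d : (B →₀ R2) →ₗ[R2] (B →₀ R2)) :
    (B →₀ R2) →ₗ[R2] (B →₀ R2) :=
  entrywise dV d

/-! `d/dU` is a derivation of `R2`, so differentiating the matrix entries of a composite obeys the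
Leibniz rule `(f ∘ h)' = f' ∘ h + f ∘ h'`. Hence `Φ_B ∘ ∂ + ∂ ∘ Φ_B` is the entrywise derivative
of the zero matrix `∂ ∘ ∂`. -/

lemma dU_single (m : ℤ × ℤ) (c : F2) :
    dU (AddMonoidAlgebra.single m c) = AddMonoidAlgebra.single (m.1 - 1, m.2) ((m.1 : F2) * c) := by
  rw [dU, AddMonoidAlgebra.coeff_single]
  exact Finsupp.sum_single_index (by simp)

def dUAddHom : R2 →+ R2 where
  toFun := dU
  map_zero' := by rw [dU, AddMonoidAlgebra.coeff_zero]; exact Finsupp.sum_zero_index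
  map_add' f g := by
    rw [dU, AddMonoidAlgebra.coeff_add]
    exact Finsupp.sum_add_index (by simp) fun _ _ _ _ => by rw [mul_add, AddMonoidAlgebra.single_add]

lemma dU_mul (f g : R2) : dU (f * g) = f * dU g + g * dU f := by
  change dUAddHom (f * g) = f * dUAddHom g + g * dUAddHom f
  induction f using AddMonoidAlgebra.induction_linear with
  | zero => simp
  | add f₁ f₂ h₁ h₂ => simp only [add_mul, map_add, h₁, h₂]; ring
  | single a c =>
    induction g using AddMonoidAlgebra.induction_linear with
    | zero => simp
    | add g₁ g₂ h₁ h₂ => simp only [mul_add, map_add, h₁, h₂]; ring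
    | single b e =>
      simp only [dUAddHom, AddMonoidHom.coe_mk, ZeroHom.coe_mk, dU_single,
        AddMonoidAlgebra.single_mul_single]
      have shift (p q : ℤ × ℤ) : p + (q.1 - 1, q.2) = ((p + q).1 - 1, (p + q).2) := by
        ext <;> simp only [Prod.fst_add, Prod.snd_add]; ring
      rw [shift, shift, add_comm b, ← AddMonoidAlgebra.single_add]
      congr 1
      push_cast [Prod.fst_add]
      ring

def dUDerivation : Derivation ℤ R2 R2 :=
  Derivation.mk' dUAddHom.toIntLinearMap dU_mul

lemma coe_dUDerivation : ⇑dUDerivation = dU := rfl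

section MatrixEntries

variable {B B' B'' : Type}

lemma matOf_add (f g : (B →₀ R2) →ₗ[R2] (B' →₀ R2)) (x : B) (y : B') :
    matOf (f + g) x y = matOf f x y + matOf g x y := rfl

lemma ext_matOf {f g : (B →₀ R2) →ₗ[R2] (B' →₀ R2)} (h : ∀ x y, matOf f x y = matOf g x y) :
    f = g :=
  Finsupp.lhom_ext' fun x => LinearMap.ext_ring <| Finsupp.ext <| h x

lemma apply_eq_sum_matOf [Fintype B] (f : (B →₀ R2) →ₗ[R2] (B' →₀ R2)) (w : B →₀ R2) (y : B') :
    f w y = ∑ z, w z * matOf f z y := by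
  conv_lhs => rw [← Finsupp.univ_sum_single w, map_sum, Finsupp.finsetSum_apply]
  refine Finset.sum_congr rfl fun z _ => ?_
  rw [← Finsupp.smul_single_one, map_smul, Finsupp.smul_apply, smul_eq_mul, matOf]

lemma matOf_comp [Fintype B'] (f : (B' →₀ R2) →ₗ[R2] (B'' →₀ R2))
    (h : (B →₀ R2) →ₗ[R2] (B' →₀ R2)) (x : B) (y : B'') :
    matOf (f ∘ₗ h) x y = ∑ z, matOf h x z * matOf f z y :=
  apply_eq_sum_matOf f _ y

lemma matOf_entrywise [Finite B'] (g : R2 → R2) (f : (B →₀ R2) →ₗ[R2] (B' →₀ R2))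
    (x : B) (y : B') : matOf (entrywise g f) x y = g (matOf f x y) := by
  simp [matOf, entrywise, bmap, LinearMap.toSpanSingleton_apply]

lemma entrywise_zero [Finite B'] {g : R2 → R2} (hg : g 0 = 0) :
    entrywise g (0 : (B →₀ R2) →ₗ[R2] (B' →₀ R2)) = 0 :=
  ext_matOf fun x y => by rw [matOf_entrywise]; exact hg

theorem entrywise_comp [Fintype B'] [Finite B''] (D : Derivation ℤ R2 R2)
    (f : (B' →₀ R2) →ₗ[R2] (B'' →₀ R2)) (h : (B →₀ R2) →ₗ[R2] (B' →₀ R2)) :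
    entrywise D (f ∘ₗ h) = entrywise D f ∘ₗ h + f ∘ₗ entrywise D h := by
  refine ext_matOf fun x y => ?_
  simp only [matOf_add, matOf_comp, matOf_entrywise, map_sum, ← Finset.sum_add_distrib,
    Derivation.leibniz, smul_eq_mul]
  exact Finset.sum_congr rfl fun z _ => by ring

end MatrixEntries

/-- the formal derivative `Φ_B` of the differential is a chain map:
`Φ_B ∘ ∂ + ∂ ∘ Φ_B = 0`. -/
theorem stmt1 {B : Type} [Fintype B]
    (d : (B →₀ R2) →ₗ[R2] (B →₀ R2)) (hd : d ∘ₗ d = 0) :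
    PhiB d ∘ₗ d + d ∘ₗ PhiB d = 0 := by
  calc PhiB d ∘ₗ d + d ∘ₗ PhiB d = entrywise dUDerivation (d ∘ₗ d) := by
        rw [entrywise_comp, coe_dUDerivation]; rfl
    _ = 0 := by rw [hd]; exact entrywise_zero (map_zero dUDerivation)

end
end

section
/- Let C₁, C₂ be chain complexes over F₂ with chain maps ι₁, Φ₁, Ψ₁ on C₁ and ι₂, Φ₂, Ψ₂ on C₂, such that Ψ₁² ≃ 0, Φ₂² ≃ 0, ι₁Ψ₁ ≃ Φ₁ι₁, ι₂Φ₂ ≃ Ψ₂ι₂, Φ₁ι₁Ψ₁ ≃ Ψ₁Φ₁ι₁ and similar commutation relations hold up to homotopy. Set F = id⊗id + Ψ₁⊗Φ₂, ι₁×₁ι₂ = (id⊗id + Φ₁⊗Ψ₂)(ι₁⊗ι₂), and ι₁×₂ι₂ = (id⊗id + Ψ₁⊗Φ₂)(ι₁⊗ι₂). Then F∘(ι₁×₁ι₂) ≃ (ι₁×₂ι₂)∘F and F∘(ι₁×₂ι₂) ≃ (ι₁×₁ι₂)∘F, where ≃ denotes chain homotopy of maps on C₁⊗C₂. -/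
open TensorProduct

noncomputable section

/-- Chain homotopy (over `F₂`) for maps between two chain complexes:
`f ≃ g` iff `f + g = d₂ ∘ H + H ∘ d₁` for some `F₂`-linear `H`. -/
def Htp2 {C C' : Type} [AddCommGroup C] [Module F2 C]
    [AddCommGroup C'] [Module F2 C']
    (d : C →ₗ[F2] C) (d' : C' →ₗ[F2] C') (f g : C →ₗ[F2] C') : Prop :=
  ∃ H : C →ₗ[F2] C', f + g = d' ∘ₗ H + H ∘ₗ d

/-- Chain homotopy of endomorphisms of a single complex. -/
def Htp {C : Type} [AddCommGroup C] [Module F2 C]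
    (d f g : C →ₗ[F2] C) : Prop :=
  Htp2 d d f g

/-- `f ⊗ id + id ⊗ g` on the tensor product of two complexes over `F₂`; applied
to the differentials it is the tensor-product differential. -/
def tD {C₁ C₂ : Type} [AddCommGroup C₁] [Module F2 C₁]
    [AddCommGroup C₂] [Module F2 C₂]
    (f : C₁ →ₗ[F2] C₁) (g : C₂ →ₗ[F2] C₂) :
    C₁ ⊗[F2] C₂ →ₗ[F2] C₁ ⊗[F2] C₂ :=
  TensorProduct.map f LinearMap.id + TensorProduct.map LinearMap.id g

/-!
Write `A = Ψ₁ ⊗ Φ₂`, `B = Φ₁ ⊗ Ψ₂`, `I = ι₁ ⊗ ι₂` and `F = 1 + A`. Tensoring the homotopies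
`Φ₁ι₁ ≃ ι₁Ψ₁` and `Ψ₂ι₂ ≃ ι₂Φ₂` gives `BI ≃ IA`, hence `(1 + B) I ≃ I F`. Composing with `F`
on the left gives the first homotopy. For the second, `F² = 1 + A² ≃ 1` in characteristic two
since `A² = Ψ₁² ⊗ Φ₂² ≃ 0`, so `F F I ≃ I ≃ I F F ≃ (1 + B) I F`.
-/

def IsChainMap {C C' : Type} [AddCommGroup C] [Module F2 C] [AddCommGroup C'] [Module F2 C']
    (d : C →ₗ[F2] C) (d' : C' →ₗ[F2] C') (f : C →ₗ[F2] C') : Prop :=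
  d' ∘ₗ f = f ∘ₗ d

section Complexes

variable {C C' C'' C₀ : Type} [AddCommGroup C] [Module F2 C] [AddCommGroup C'] [Module F2 C']
  [AddCommGroup C''] [Module F2 C''] [AddCommGroup C₀] [Module F2 C₀]
  {d : C →ₗ[F2] C} {d' : C' →ₗ[F2] C'} {d'' : C'' →ₗ[F2] C''} {d₀ : C₀ →ₗ[F2] C₀}

namespace IsChainMap

theorem id : IsChainMap d d LinearMap.id := by
  simp [IsChainMap]

theorem add {f g : C →ₗ[F2] C'} (hf : IsChainMap d d' f) (hg : IsChainMap d d' g) :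
    IsChainMap d d' (f + g) := by
  rw [IsChainMap, LinearMap.comp_add, LinearMap.add_comp, hf, hg]

theorem comp {f : C →ₗ[F2] C'} {g : C' →ₗ[F2] C''} (hf : IsChainMap d d' f)
    (hg : IsChainMap d' d'' g) : IsChainMap d d'' (g ∘ₗ f) := by
  rw [IsChainMap, ← LinearMap.comp_assoc, hg, LinearMap.comp_assoc, hf, LinearMap.comp_assoc]

end IsChainMap

namespace Htp2

variable {f g h f' g' : C →ₗ[F2] C'}

theorem of_add_eq (hfg : Htp2 d d' f g) (h : f + g = f' + g') : Htp2 d d' f' g' := by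
  obtain ⟨H, hH⟩ := hfg
  exact ⟨H, h ▸ hH⟩

theorem refl (f : C →ₗ[F2] C') : Htp2 d d' f f :=
  ⟨0, by simp [ZModModule.add_self]⟩

theorem symm (hfg : Htp2 d d' f g) : Htp2 d d' g f :=
  hfg.of_add_eq (add_comm f g)

theorem add (hfg : Htp2 d d' f g) (hfg' : Htp2 d d' f' g') : Htp2 d d' (f + f') (g + g') := by
  obtain ⟨H, hH⟩ := hfg
  obtain ⟨H', hH'⟩ := hfg'
  refine ⟨H + H', ?_⟩
  rw [add_add_add_comm, hH, hH', LinearMap.comp_add, LinearMap.add_comp]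
  abel

theorem trans (hfg : Htp2 d d' f g) (hgh : Htp2 d d' g h) : Htp2 d d' f h :=
  (hfg.add hgh).of_add_eq (by rw [add_add_add_comm, ZModModule.add_add_add_cancel])

theorem comp_left {a : C' →ₗ[F2] C''} (ha : IsChainMap d' d'' a) (hfg : Htp2 d d' f g) :
    Htp2 d d'' (a ∘ₗ f) (a ∘ₗ g) := by
  obtain ⟨H, hH⟩ := hfg
  refine ⟨a ∘ₗ H, ?_⟩
  unfold IsChainMap at ha
  rw [← LinearMap.comp_add, hH, LinearMap.comp_add, ← LinearMap.comp_assoc H a d'', ha]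
  rfl

theorem comp_right {b : C₀ →ₗ[F2] C} (hb : IsChainMap d₀ d b) (hfg : Htp2 d d' f g) :
    Htp2 d₀ d' (f ∘ₗ b) (g ∘ₗ b) := by
  obtain ⟨H, hH⟩ := hfg
  refine ⟨H ∘ₗ b, ?_⟩
  unfold IsChainMap at hb
  rw [← LinearMap.add_comp, hH, LinearMap.add_comp, LinearMap.comp_assoc b d H, hb]
  rfl

end Htp2

end Complexes

section TensorProduct

variable {C₁ C₁' C₂ C₂' : Type} [AddCommGroup C₁] [Module F2 C₁] [AddCommGroup C₁'] [Module F2 C₁']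
  [AddCommGroup C₂] [Module F2 C₂] [AddCommGroup C₂'] [Module F2 C₂']
  {d₁ : C₁ →ₗ[F2] C₁} {d₁' : C₁' →ₗ[F2] C₁'} {d₂ : C₂ →ₗ[F2] C₂} {d₂' : C₂' →ₗ[F2] C₂'}

theorem tD_comp_map (f : C₁ →ₗ[F2] C₁') (g : C₂ →ₗ[F2] C₂') :
    tD d₁' d₂' ∘ₗ map f g = map (d₁' ∘ₗ f) g + map f (d₂' ∘ₗ g) := by
  simp only [tD, LinearMap.add_comp, ← map_comp, LinearMap.id_comp]

theorem map_comp_tD (f : C₁ →ₗ[F2] C₁') (g : C₂ →ₗ[F2] C₂') :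
    map f g ∘ₗ tD d₁ d₂ = map (f ∘ₗ d₁) g + map f (g ∘ₗ d₂) := by
  simp only [tD, LinearMap.comp_add, ← map_comp, LinearMap.comp_id]

theorem IsChainMap.tensor_map {f : C₁ →ₗ[F2] C₁'} {g : C₂ →ₗ[F2] C₂'}
    (hf : IsChainMap d₁ d₁' f) (hg : IsChainMap d₂ d₂' g) :
    IsChainMap (tD d₁ d₂) (tD d₁' d₂') (map f g) := by
  unfold IsChainMap at hf hg ⊢
  rw [tD_comp_map, map_comp_tD, hf, hg]

namespace Htp2

variable {f f' : C₁ →ₗ[F2] C₁'} {g g' : C₂ →ₗ[F2] C₂'}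

theorem tensor_map_left (hff' : Htp2 d₁ d₁' f f') (hg : IsChainMap d₂ d₂' g) :
    Htp2 (tD d₁ d₂) (tD d₁' d₂') (map f g) (map f' g) := by
  obtain ⟨H, hH⟩ := hff'
  refine ⟨map H g, ?_⟩
  unfold IsChainMap at hg
  rw [← map_add_left, hH, map_add_left, tD_comp_map, map_comp_tD, hg, add_add_add_comm,
    ZModModule.add_self, add_zero]

theorem tensor_map_right (hf : IsChainMap d₁ d₁' f) (hgg' : Htp2 d₂ d₂' g g') :
    Htp2 (tD d₁ d₂) (tD d₁' d₂') (map f g) (map f g') := by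
  obtain ⟨H, hH⟩ := hgg'
  refine ⟨map f H, ?_⟩
  unfold IsChainMap at hf
  rw [← map_add_right, hH, map_add_right, tD_comp_map, map_comp_tD, hf, add_add_add_comm,
    ZModModule.add_self, zero_add]

theorem tensor_map (hff' : Htp2 d₁ d₁' f f') (hgg' : Htp2 d₂ d₂' g g')
    (hf' : IsChainMap d₁ d₁' f') (hg : IsChainMap d₂ d₂' g) :
    Htp2 (tD d₁ d₂) (tD d₁' d₂') (map f g) (map f' g') :=
  (tensor_map_left hff' hg).trans (tensor_map_right hf' hgg')

end Htp2

theorem LinearMap.id_add_comp_id_add_self {M : Type} [AddCommGroup M] [Module F2 M]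
    (a : M →ₗ[F2] M) : (LinearMap.id + a) ∘ₗ (LinearMap.id + a) = LinearMap.id + a ∘ₗ a := by
  rw [LinearMap.comp_add, LinearMap.comp_id, LinearMap.add_comp, LinearMap.id_comp, add_assoc,
    ← add_assoc a, ZModModule.add_self, zero_add]

theorem Htp2.id_add_map_comp_self {f : C₁ →ₗ[F2] C₁} {g : C₂ →ₗ[F2] C₂}
    (hf : Htp2 d₁ d₁ (f ∘ₗ f) 0) (hg : IsChainMap d₂ d₂ (g ∘ₗ g)) :
    Htp2 (tD d₁ d₂) (tD d₁ d₂) ((LinearMap.id + map f g) ∘ₗ (LinearMap.id + map f g))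
      LinearMap.id := by
  have hsq : Htp2 (tD d₁ d₂) (tD d₁ d₂) (map f g ∘ₗ map f g) 0 := by
    simpa only [map_comp, map_zero_left] using hf.tensor_map_left hg
  rw [LinearMap.id_add_comp_id_add_self]
  simpa only [add_zero] using (Htp2.refl LinearMap.id).add hsq

theorem Htp2.id_add_map_comp_map {ι₁ : C₁ →ₗ[F2] C₁'} {Ψ₁ : C₁ →ₗ[F2] C₁}
    {Φ₁ : C₁' →ₗ[F2] C₁'} {ι₂ : C₂ →ₗ[F2] C₂'} {Φ₂ : C₂ →ₗ[F2] C₂} {Ψ₂ : C₂' →ₗ[F2] C₂'}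
    (hι₁ : IsChainMap d₁ d₁' ι₁) (hΨ₁ : IsChainMap d₁ d₁ Ψ₁)
    (hι₂ : IsChainMap d₂ d₂' ι₂) (hΨ₂ : IsChainMap d₂' d₂' Ψ₂)
    (h₁ : Htp2 d₁ d₁' (ι₁ ∘ₗ Ψ₁) (Φ₁ ∘ₗ ι₁)) (h₂ : Htp2 d₂ d₂' (ι₂ ∘ₗ Φ₂) (Ψ₂ ∘ₗ ι₂)) :
    Htp2 (tD d₁ d₂) (tD d₁' d₂') ((LinearMap.id + map Φ₁ Ψ₂) ∘ₗ map ι₁ ι₂)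
      (map ι₁ ι₂ ∘ₗ (LinearMap.id + map Ψ₁ Φ₂)) := by
  have hBI : Htp2 (tD d₁ d₂) (tD d₁' d₂') (map (Φ₁ ∘ₗ ι₁) (Ψ₂ ∘ₗ ι₂))
      (map (ι₁ ∘ₗ Ψ₁) (ι₂ ∘ₗ Φ₂)) :=
    h₁.symm.tensor_map h₂.symm (hΨ₁.comp hι₁) (hι₂.comp hΨ₂)
  simpa only [LinearMap.add_comp, LinearMap.comp_add, LinearMap.id_comp, LinearMap.comp_id,
    ← map_comp] using (Htp2.refl (map ι₁ ι₂)).add hBI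

end TensorProduct

theorem stmt9_general {C₁ C₂ : Type} [AddCommGroup C₁] [Module F2 C₁]
    [AddCommGroup C₂] [Module F2 C₂]
    (d₁ ι₁ Φ₁ Ψ₁ : C₁ →ₗ[F2] C₁) (d₂ ι₂ Φ₂ Ψ₂ : C₂ →ₗ[F2] C₂)
    (hι₁ : d₁ ∘ₗ ι₁ = ι₁ ∘ₗ d₁) (hΨ₁ : d₁ ∘ₗ Ψ₁ = Ψ₁ ∘ₗ d₁)
    (hι₂ : d₂ ∘ₗ ι₂ = ι₂ ∘ₗ d₂) (hΦ₂ : d₂ ∘ₗ Φ₂ = Φ₂ ∘ₗ d₂) (hΨ₂ : d₂ ∘ₗ Ψ₂ = Ψ₂ ∘ₗ d₂)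
    (hΨ₁2 : Htp d₁ (Ψ₁ ∘ₗ Ψ₁) 0)
    (hi₁ : Htp d₁ (ι₁ ∘ₗ Ψ₁) (Φ₁ ∘ₗ ι₁)) (hi₂ : Htp d₂ (ι₂ ∘ₗ Φ₂) (Ψ₂ ∘ₗ ι₂)) :
    Htp (tD d₁ d₂)
      ((LinearMap.id + TensorProduct.map Ψ₁ Φ₂) ∘ₗ
        ((LinearMap.id + TensorProduct.map Φ₁ Ψ₂) ∘ₗ TensorProduct.map ι₁ ι₂))
      (((LinearMap.id + TensorProduct.map Ψ₁ Φ₂) ∘ₗ TensorProduct.map ι₁ ι₂) ∘ₗ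
        (LinearMap.id + TensorProduct.map Ψ₁ Φ₂)) ∧
    Htp (tD d₁ d₂)
      ((LinearMap.id + TensorProduct.map Ψ₁ Φ₂) ∘ₗ
        ((LinearMap.id + TensorProduct.map Ψ₁ Φ₂) ∘ₗ TensorProduct.map ι₁ ι₂))
      (((LinearMap.id + TensorProduct.map Φ₁ Ψ₂) ∘ₗ TensorProduct.map ι₁ ι₂) ∘ₗ
        (LinearMap.id + TensorProduct.map Ψ₁ Φ₂)) := by
  unfold Htp
  set F := LinearMap.id + map Ψ₁ Φ₂
  set I := map ι₁ ι₂
  have hF : IsChainMap (tD d₁ d₂) (tD d₁ d₂) F :=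
    IsChainMap.id.add (IsChainMap.tensor_map hΨ₁ hΦ₂)
  have hI : IsChainMap (tD d₁ d₂) (tD d₁ d₂) I := IsChainMap.tensor_map hι₁ hι₂
  have key : Htp2 (tD d₁ d₂) (tD d₁ d₂) ((LinearMap.id + map Φ₁ Ψ₂) ∘ₗ I) (I ∘ₗ F) :=
    Htp2.id_add_map_comp_map hι₁ hΨ₁ hι₂ hΨ₂ hi₁ hi₂
  have hFF : Htp2 (tD d₁ d₂) (tD d₁ d₂) (F ∘ₗ F) LinearMap.id :=
    Htp2.id_add_map_comp_self hΨ₁2 (IsChainMap.comp hΦ₂ hΦ₂)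
  refine ⟨?_, ?_⟩
  · simpa only [LinearMap.comp_assoc] using key.comp_left hF
  · have hFFI : Htp2 (tD d₁ d₂) (tD d₁ d₂) (F ∘ₗ (F ∘ₗ I)) I := by
      simpa only [LinearMap.comp_assoc, LinearMap.id_comp] using hFF.comp_right hI
    have hIFF : Htp2 (tD d₁ d₂) (tD d₁ d₂) I ((I ∘ₗ F) ∘ₗ F) := by
      simpa only [LinearMap.comp_assoc, LinearMap.comp_id] using hFF.symm.comp_left hI
    exact hFFI.trans (hIFF.trans (key.symm.comp_right hF))

/-- with `F = id⊗id + Ψ₁⊗Φ₂`, `ι₁×₁ι₂ = (id + Φ₁⊗Ψ₂)(ι₁⊗ι₂)` and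
`ι₁×₂ι₂ = (id + Ψ₁⊗Φ₂)(ι₁⊗ι₂)`, one has `F∘(ι₁×₁ι₂) ≃ (ι₁×₂ι₂)∘F` and
`F∘(ι₁×₂ι₂) ≃ (ι₁×₁ι₂)∘F`, given `Ψ₁² ≃ 0`, `Φ₂² ≃ 0`, the intertwining
relations `ι₁Ψ₁ ≃ Φ₁ι₁`, `ι₂Φ₂ ≃ Ψ₂ι₂`, `ι₁Φ₁ ≃ Ψ₁ι₁`, `ι₂Ψ₂ ≃ Φ₂ι₂`, and the
commutation relations `Φ₁ι₁Ψ₁ ≃ Ψ₁Φ₁ι₁`, `Ψ₂ι₂Φ₂ ≃ Φ₂Ψ₂ι₂`. -/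
theorem stmt9 {C₁ C₂ : Type} [AddCommGroup C₁] [Module F2 C₁]
    [AddCommGroup C₂] [Module F2 C₂]
    (d₁ ι₁ Φ₁ Ψ₁ : C₁ →ₗ[F2] C₁) (d₂ ι₂ Φ₂ Ψ₂ : C₂ →ₗ[F2] C₂)
    (hd₁ : d₁ ∘ₗ d₁ = 0) (hd₂ : d₂ ∘ₗ d₂ = 0)
    (hι₁ : d₁ ∘ₗ ι₁ = ι₁ ∘ₗ d₁) (hΦ₁ : d₁ ∘ₗ Φ₁ = Φ₁ ∘ₗ d₁) (hΨ₁ : d₁ ∘ₗ Ψ₁ = Ψ₁ ∘ₗ d₁)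
    (hι₂ : d₂ ∘ₗ ι₂ = ι₂ ∘ₗ d₂) (hΦ₂ : d₂ ∘ₗ Φ₂ = Φ₂ ∘ₗ d₂) (hΨ₂ : d₂ ∘ₗ Ψ₂ = Ψ₂ ∘ₗ d₂)
    (hΨ₁2 : Htp d₁ (Ψ₁ ∘ₗ Ψ₁) 0) (hΦ₂2 : Htp d₂ (Φ₂ ∘ₗ Φ₂) 0)
    (hi₁ : Htp d₁ (ι₁ ∘ₗ Ψ₁) (Φ₁ ∘ₗ ι₁)) (hi₂ : Htp d₂ (ι₂ ∘ₗ Φ₂) (Ψ₂ ∘ₗ ι₂))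
    (hi₁' : Htp d₁ (ι₁ ∘ₗ Φ₁) (Ψ₁ ∘ₗ ι₁)) (hi₂' : Htp d₂ (ι₂ ∘ₗ Ψ₂) (Φ₂ ∘ₗ ι₂))
    (hc₁ : Htp d₁ (Φ₁ ∘ₗ ι₁ ∘ₗ Ψ₁) (Ψ₁ ∘ₗ Φ₁ ∘ₗ ι₁))
    (hc₂ : Htp d₂ (Ψ₂ ∘ₗ ι₂ ∘ₗ Φ₂) (Φ₂ ∘ₗ Ψ₂ ∘ₗ ι₂)) :
    Htp (tD d₁ d₂)
      ((LinearMap.id + TensorProduct.map Ψ₁ Φ₂) ∘ₗ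
        ((LinearMap.id + TensorProduct.map Φ₁ Ψ₂) ∘ₗ TensorProduct.map ι₁ ι₂))
      (((LinearMap.id + TensorProduct.map Ψ₁ Φ₂) ∘ₗ TensorProduct.map ι₁ ι₂) ∘ₗ
        (LinearMap.id + TensorProduct.map Ψ₁ Φ₂)) ∧
    Htp (tD d₁ d₂)
      ((LinearMap.id + TensorProduct.map Ψ₁ Φ₂) ∘ₗ
        ((LinearMap.id + TensorProduct.map Ψ₁ Φ₂) ∘ₗ TensorProduct.map ι₁ ι₂))
      (((LinearMap.id + TensorProduct.map Φ₁ Ψ₂) ∘ₗ TensorProduct.map ι₁ ι₂) ∘ₗ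
        (LinearMap.id + TensorProduct.map Ψ₁ Φ₂)) :=
  stmt9_general d₁ ι₁ Φ₁ Ψ₁ d₂ ι₂ Φ₂ Ψ₂ hι₁ hΨ₁ hι₂ hΦ₂ hΨ₂ hΨ₁2 hi₁ hi₂

end
end

section
/- Let C₁, C₂, C₃ be chain complexes over F₂ equipped with chain maps ιᵢ, Φᵢ, Ψᵢ satisfying Φᵢ² ≃ 0, Ψᵢ² ≃ 0 and ΦᵢΨᵢ ≃ ΨᵢΦᵢ. Define the product involution on a tensor product by ι ×₁ ι' = ι⊗ι' + Φι⊗Ψι' (with Φ,Ψ the relevant maps on each factor, and formal derivative maps on a tensor product given by Φ⊗id + id⊗Φ etc.). Then the two triple products satisfy ((ι₁×₁ι₂)×₁ι₃) + (ι₁×₁(ι₂×₁ι₃)) = Φ₁ι₁⊗Φ₂Ψ₂ι₂⊗Ψ₃ι₃ + Φ₁²ι₁⊗Ψ₂ι₂⊗Ψ₃ι₃ + Φ₁ι₁⊗Ψ₂Φ₂ι₂⊗Ψ₃ι₃ + Φ₁ι₁⊗Φ₂ι₂⊗Ψ₃²ι₃, and this difference is chain homotopic to zero. Hence the product ×₁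 is associative up to chain homotopy. -/
open TensorProduct

noncomputable section

/-- The product involution `ι ×₁ ι' = ι⊗ι' + (Φι)⊗(Ψ'ι')` on a tensor product,
where `Φ` is the relevant map on the first factor and `Ψ'` on the second. -/
def pp {A B : Type} [AddCommGroup A] [Module F2 A] [AddCommGroup B] [Module F2 B]
    (ι Φ : A →ₗ[F2] A) (ι' Ψ' : B →ₗ[F2] B) : A ⊗[F2] B →ₗ[F2] A ⊗[F2] B :=
  TensorProduct.map ι ι' + TensorProduct.map (Φ ∘ₗ ι) (Ψ' ∘ₗ ι')

section ChainMaps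

variable {C C' C'' : Type} [AddCommGroup C] [Module F2 C] [AddCommGroup C'] [Module F2 C']
  [AddCommGroup C''] [Module F2 C''] {d : C →ₗ[F2] C} {d' : C' →ₗ[F2] C'} {d'' : C'' →ₗ[F2] C''}

theorem IsChainMap.comp_s10 {f : C →ₗ[F2] C'} {g : C' →ₗ[F2] C''}
    (hg : IsChainMap d' d'' g) (hf : IsChainMap d d' f) : IsChainMap d d'' (g ∘ₗ f) := by
  unfold IsChainMap at *
  rw [← LinearMap.comp_assoc, hg, LinearMap.comp_assoc, hf, LinearMap.comp_assoc]

theorem htp2_iff_htp2_add_zero {f g : C →ₗ[F2] C'} : Htp2 d d' f g ↔ Htp2 d d' (f + g) 0 := by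
  simp only [Htp2, add_zero]

theorem Htp2.add_s10 {f g : C →ₗ[F2] C'} (hf : Htp2 d d' f 0) (hg : Htp2 d d' g 0) :
    Htp2 d d' (f + g) 0 := by
  obtain ⟨H, hH⟩ := hf
  obtain ⟨K, hK⟩ := hg
  refine ⟨H + K, ?_⟩
  rw [add_zero] at hH hK ⊢
  rw [hH, hK, LinearMap.comp_add, LinearMap.add_comp]
  abel

theorem Htp2.comp_chainMap {f : C' →ₗ[F2] C''} {c : C →ₗ[F2] C'}
    (hf : Htp2 d' d'' f 0) (hc : IsChainMap d d' c) : Htp2 d d'' (f ∘ₗ c) 0 := by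
  obtain ⟨H, hH⟩ := hf
  refine ⟨H ∘ₗ c, ?_⟩
  rw [add_zero] at hH ⊢
  unfold IsChainMap at hc
  rw [hH, LinearMap.add_comp, LinearMap.comp_assoc, LinearMap.comp_assoc, hc]
  rfl

end ChainMaps

section TensorMaps

variable {C₁ C₁' C₂ C₂' : Type} [AddCommGroup C₁] [Module F2 C₁] [AddCommGroup C₁'] [Module F2 C₁']
  [AddCommGroup C₂] [Module F2 C₂] [AddCommGroup C₂'] [Module F2 C₂']
  {d₁ : C₁ →ₗ[F2] C₁} {d₁' : C₁' →ₗ[F2] C₁'} {d₂ : C₂ →ₗ[F2] C₂} {d₂' : C₂' →ₗ[F2] C₂'}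
  {f : C₁ →ₗ[F2] C₁'} {g : C₂ →ₗ[F2] C₂'}

theorem IsChainMap.map (hf : IsChainMap d₁ d₁' f) (hg : IsChainMap d₂ d₂' g) :
    IsChainMap (tD d₁ d₂) (tD d₁' d₂') (TensorProduct.map f g) := by
  unfold IsChainMap at *
  simp only [tD, LinearMap.add_comp, LinearMap.comp_add, ← TensorProduct.map_comp, hf, hg,
    LinearMap.id_comp, LinearMap.comp_id]

/-- The homotopy is `H ⊗ g`: over `F₂` its cross terms `H ⊗ d₂'g` and `H ⊗ gd₂` cancel. -/
theorem Htp2.map_left (hf : Htp2 d₁ d₁' f 0) (hg : IsChainMap d₂ d₂' g) :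
    Htp2 (tD d₁ d₂) (tD d₁' d₂') (TensorProduct.map f g) 0 := by
  obtain ⟨H, hH⟩ := hf
  unfold IsChainMap at hg
  refine ⟨TensorProduct.map H g, ?_⟩
  rw [add_zero] at hH ⊢
  simp only [tD, hH, LinearMap.add_comp, LinearMap.comp_add, ← TensorProduct.map_comp,
    LinearMap.id_comp, LinearMap.comp_id, TensorProduct.map_add_left, hg]
  rw [add_add_add_comm, ZModModule.add_self, add_zero]

theorem Htp2.map_right (hf : IsChainMap d₁ d₁' f) (hg : Htp2 d₂ d₂' g 0) :
    Htp2 (tD d₁ d₂) (tD d₁' d₂') (TensorProduct.map f g) 0 := by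
  obtain ⟨H, hH⟩ := hg
  unfold IsChainMap at hf
  refine ⟨TensorProduct.map f H, ?_⟩
  rw [add_zero] at hH ⊢
  simp only [tD, hH, LinearMap.add_comp, LinearMap.comp_add, ← TensorProduct.map_comp,
    LinearMap.id_comp, LinearMap.comp_id, TensorProduct.map_add_right, hf]
  rw [add_add_add_comm, ZModModule.add_self, zero_add]

end TensorMaps

theorem assoc_pp_pp_add_pp_pp {C₁ C₂ C₃ : Type} [AddCommGroup C₁] [Module F2 C₁]
    [AddCommGroup C₂] [Module F2 C₂] [AddCommGroup C₃] [Module F2 C₃]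
    (ι₁ Φ₁ : C₁ →ₗ[F2] C₁) (ι₂ Φ₂ Ψ₂ : C₂ →ₗ[F2] C₂) (ι₃ Ψ₃ : C₃ →ₗ[F2] C₃) :
    (TensorProduct.assoc F2 C₁ C₂ C₃).toLinearMap ∘ₗ
        pp (pp ι₁ Φ₁ ι₂ Ψ₂) (tD Φ₁ Φ₂) ι₃ Ψ₃ ∘ₗ
        (TensorProduct.assoc F2 C₁ C₂ C₃).symm.toLinearMap
      + pp ι₁ Φ₁ (pp ι₂ Φ₂ ι₃ Ψ₃) (tD Ψ₂ Ψ₃)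
      = TensorProduct.map (Φ₁ ∘ₗ ι₁)
            (TensorProduct.map (Φ₂ ∘ₗ Ψ₂ ∘ₗ ι₂) (Ψ₃ ∘ₗ ι₃))
        + TensorProduct.map (Φ₁ ∘ₗ Φ₁ ∘ₗ ι₁)
            (TensorProduct.map (Ψ₂ ∘ₗ ι₂) (Ψ₃ ∘ₗ ι₃))
        + TensorProduct.map (Φ₁ ∘ₗ ι₁)
            (TensorProduct.map (Ψ₂ ∘ₗ Φ₂ ∘ₗ ι₂) (Ψ₃ ∘ₗ ι₃))
        + TensorProduct.map (Φ₁ ∘ₗ ι₁)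
            (TensorProduct.map (Φ₂ ∘ₗ ι₂) (Ψ₃ ∘ₗ Ψ₃ ∘ₗ ι₃)) := by
  ext x y z
  simp only [pp, tD, AlgebraTensorModule.curry_apply, LinearMap.restrictScalars_self, curry_apply,
    LinearMap.add_apply, LinearMap.coe_comp, LinearEquiv.coe_coe, Function.comp_apply,
    assoc_symm_tmul, map_tmul, add_tmul, map_add, LinearMap.id_coe, id_eq, assoc_tmul, tmul_add]
  abel_nf
  simp only [two_zsmul, ZModModule.add_self, zero_add]

theorem stmt10_general {C₁ C₂ C₃ : Type} [AddCommGroup C₁] [Module F2 C₁]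
    [AddCommGroup C₂] [Module F2 C₂] [AddCommGroup C₃] [Module F2 C₃]
    (d₁ ι₁ Φ₁ : C₁ →ₗ[F2] C₁) (d₂ ι₂ Φ₂ Ψ₂ : C₂ →ₗ[F2] C₂)
    (d₃ ι₃ Ψ₃ : C₃ →ₗ[F2] C₃)
    (hι₁ : d₁ ∘ₗ ι₁ = ι₁ ∘ₗ d₁) (hΦ₁ : d₁ ∘ₗ Φ₁ = Φ₁ ∘ₗ d₁)
    (hι₂ : d₂ ∘ₗ ι₂ = ι₂ ∘ₗ d₂) (hΦ₂ : d₂ ∘ₗ Φ₂ = Φ₂ ∘ₗ d₂) (hΨ₂ : d₂ ∘ₗ Ψ₂ = Ψ₂ ∘ₗ d₂)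
    (hι₃ : d₃ ∘ₗ ι₃ = ι₃ ∘ₗ d₃) (hΨ₃ : d₃ ∘ₗ Ψ₃ = Ψ₃ ∘ₗ d₃)
    (hΦ₁2 : Htp d₁ (Φ₁ ∘ₗ Φ₁) 0)
    (hΨ₃2 : Htp d₃ (Ψ₃ ∘ₗ Ψ₃) 0)
    (hc₂ : Htp d₂ (Φ₂ ∘ₗ Ψ₂) (Ψ₂ ∘ₗ Φ₂)) :
    (TensorProduct.assoc F2 C₁ C₂ C₃).toLinearMap ∘ₗ
        pp (pp ι₁ Φ₁ ι₂ Ψ₂) (tD Φ₁ Φ₂) ι₃ Ψ₃ ∘ₗ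
        (TensorProduct.assoc F2 C₁ C₂ C₃).symm.toLinearMap
      + pp ι₁ Φ₁ (pp ι₂ Φ₂ ι₃ Ψ₃) (tD Ψ₂ Ψ₃)
      = TensorProduct.map (Φ₁ ∘ₗ ι₁)
            (TensorProduct.map (Φ₂ ∘ₗ Ψ₂ ∘ₗ ι₂) (Ψ₃ ∘ₗ ι₃))
        + TensorProduct.map (Φ₁ ∘ₗ Φ₁ ∘ₗ ι₁)
            (TensorProduct.map (Ψ₂ ∘ₗ ι₂) (Ψ₃ ∘ₗ ι₃))
        + TensorProduct.map (Φ₁ ∘ₗ ι₁)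
            (TensorProduct.map (Ψ₂ ∘ₗ Φ₂ ∘ₗ ι₂) (Ψ₃ ∘ₗ ι₃))
        + TensorProduct.map (Φ₁ ∘ₗ ι₁)
            (TensorProduct.map (Φ₂ ∘ₗ ι₂) (Ψ₃ ∘ₗ Ψ₃ ∘ₗ ι₃)) ∧
    Htp (tD d₁ (tD d₂ d₃))
      ((TensorProduct.assoc F2 C₁ C₂ C₃).toLinearMap ∘ₗ
        pp (pp ι₁ Φ₁ ι₂ Ψ₂) (tD Φ₁ Φ₂) ι₃ Ψ₃ ∘ₗ
        (TensorProduct.assoc F2 C₁ C₂ C₃).symm.toLinearMap)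
      (pp ι₁ Φ₁ (pp ι₂ Φ₂ ι₃ Ψ₃) (tD Ψ₂ Ψ₃)) := by
  have hsum := assoc_pp_pp_add_pp_pp ι₁ Φ₁ ι₂ Φ₂ Ψ₂ ι₃ Ψ₃
  refine ⟨hsum, ?_⟩
  have hΦι₁ : IsChainMap d₁ d₁ (Φ₁ ∘ₗ ι₁) := IsChainMap.comp_s10 hΦ₁ hι₁
  have hΦι₂ : IsChainMap d₂ d₂ (Φ₂ ∘ₗ ι₂) := IsChainMap.comp_s10 hΦ₂ hι₂
  have hΨι₂ : IsChainMap d₂ d₂ (Ψ₂ ∘ₗ ι₂) := IsChainMap.comp_s10 hΨ₂ hι₂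
  have hΨι₃ : IsChainMap d₃ d₃ (Ψ₃ ∘ₗ ι₃) := IsChainMap.comp_s10 hΨ₃ hι₃
  have hΦΦι₁ : Htp2 d₁ d₁ (Φ₁ ∘ₗ Φ₁ ∘ₗ ι₁) 0 := hΦ₁2.comp_chainMap hι₁
  have hΨΨι₃ : Htp2 d₃ d₃ (Ψ₃ ∘ₗ Ψ₃ ∘ₗ ι₃) 0 := hΨ₃2.comp_chainMap hι₃
  have hcommι₂ : Htp2 d₂ d₂ ((Φ₂ ∘ₗ Ψ₂ + Ψ₂ ∘ₗ Φ₂) ∘ₗ ι₂) 0 :=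
    (htp2_iff_htp2_add_zero.mp hc₂).comp_chainMap hι₂
  have hE₁₃ := Htp2.map_right hΦι₁ (hcommι₂.map_left hΨι₃)
  have hE₂ := hΦΦι₁.map_left (hΨι₂.map hΨι₃)
  have hE₄ := Htp2.map_right hΦι₁ (Htp2.map_right hΦι₂ hΨΨι₃)
  simp only [LinearMap.add_comp, map_add_left, map_add_right, LinearMap.comp_assoc] at hE₁₃
  rw [Htp, htp2_iff_htp2_add_zero, hsum, add_right_comm _ (map (Φ₁ ∘ₗ Φ₁ ∘ₗ ι₁) _)]
  exact (hE₁₃.add_s10 hE₂).add_s10 hE₄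

/-- associativity of the product `×₁` up to chain homotopy.
Transporting `(ι₁×₁ι₂)×₁ι₃` through the associator, the difference with
`ι₁×₁(ι₂×₁ι₃)` equals the four-term error sum, which is chain homotopic to
zero; hence the two triple products are chain homotopic. -/
theorem stmt10 {C₁ C₂ C₃ : Type} [AddCommGroup C₁] [Module F2 C₁]
    [AddCommGroup C₂] [Module F2 C₂] [AddCommGroup C₃] [Module F2 C₃]
    (d₁ ι₁ Φ₁ Ψ₁ : C₁ →ₗ[F2] C₁) (d₂ ι₂ Φ₂ Ψ₂ : C₂ →ₗ[F2] C₂)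
    (d₃ ι₃ Φ₃ Ψ₃ : C₃ →ₗ[F2] C₃)
    (hd₁ : d₁ ∘ₗ d₁ = 0) (hd₂ : d₂ ∘ₗ d₂ = 0) (hd₃ : d₃ ∘ₗ d₃ = 0)
    (hι₁ : d₁ ∘ₗ ι₁ = ι₁ ∘ₗ d₁) (hΦ₁ : d₁ ∘ₗ Φ₁ = Φ₁ ∘ₗ d₁) (hΨ₁ : d₁ ∘ₗ Ψ₁ = Ψ₁ ∘ₗ d₁)
    (hι₂ : d₂ ∘ₗ ι₂ = ι₂ ∘ₗ d₂) (hΦ₂ : d₂ ∘ₗ Φ₂ = Φ₂ ∘ₗ d₂) (hΨ₂ : d₂ ∘ₗ Ψ₂ = Ψ₂ ∘ₗ d₂)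
    (hι₃ : d₃ ∘ₗ ι₃ = ι₃ ∘ₗ d₃) (hΦ₃ : d₃ ∘ₗ Φ₃ = Φ₃ ∘ₗ d₃) (hΨ₃ : d₃ ∘ₗ Ψ₃ = Ψ₃ ∘ₗ d₃)
    (hΦ₁2 : Htp d₁ (Φ₁ ∘ₗ Φ₁) 0) (hΨ₁2 : Htp d₁ (Ψ₁ ∘ₗ Ψ₁) 0)
    (hΦ₂2 : Htp d₂ (Φ₂ ∘ₗ Φ₂) 0) (hΨ₂2 : Htp d₂ (Ψ₂ ∘ₗ Ψ₂) 0)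
    (hΦ₃2 : Htp d₃ (Φ₃ ∘ₗ Φ₃) 0) (hΨ₃2 : Htp d₃ (Ψ₃ ∘ₗ Ψ₃) 0)
    (hc₁ : Htp d₁ (Φ₁ ∘ₗ Ψ₁) (Ψ₁ ∘ₗ Φ₁)) (hc₂ : Htp d₂ (Φ₂ ∘ₗ Ψ₂) (Ψ₂ ∘ₗ Φ₂))
    (hc₃ : Htp d₃ (Φ₃ ∘ₗ Ψ₃) (Ψ₃ ∘ₗ Φ₃)) :
    (TensorProduct.assoc F2 C₁ C₂ C₃).toLinearMap ∘ₗ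
        pp (pp ι₁ Φ₁ ι₂ Ψ₂) (tD Φ₁ Φ₂) ι₃ Ψ₃ ∘ₗ
        (TensorProduct.assoc F2 C₁ C₂ C₃).symm.toLinearMap
      + pp ι₁ Φ₁ (pp ι₂ Φ₂ ι₃ Ψ₃) (tD Ψ₂ Ψ₃)
      = TensorProduct.map (Φ₁ ∘ₗ ι₁)
            (TensorProduct.map (Φ₂ ∘ₗ Ψ₂ ∘ₗ ι₂) (Ψ₃ ∘ₗ ι₃))
        + TensorProduct.map (Φ₁ ∘ₗ Φ₁ ∘ₗ ι₁)
            (TensorProduct.map (Ψ₂ ∘ₗ ι₂) (Ψ₃ ∘ₗ ι₃))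
        + TensorProduct.map (Φ₁ ∘ₗ ι₁)
            (TensorProduct.map (Ψ₂ ∘ₗ Φ₂ ∘ₗ ι₂) (Ψ₃ ∘ₗ ι₃))
        + TensorProduct.map (Φ₁ ∘ₗ ι₁)
            (TensorProduct.map (Φ₂ ∘ₗ ι₂) (Ψ₃ ∘ₗ Ψ₃ ∘ₗ ι₃)) ∧
    Htp (tD d₁ (tD d₂ d₃))
      ((TensorProduct.assoc F2 C₁ C₂ C₃).toLinearMap ∘ₗ
        pp (pp ι₁ Φ₁ ι₂ Ψ₂) (tD Φ₁ Φ₂) ι₃ Ψ₃ ∘ₗ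
        (TensorProduct.assoc F2 C₁ C₂ C₃).symm.toLinearMap)
      (pp ι₁ Φ₁ (pp ι₂ Φ₂ ι₃ Ψ₃) (tD Ψ₂ Ψ₃)) :=
  stmt10_general d₁ ι₁ Φ₁ d₂ ι₂ Φ₂ Ψ₂ d₃ ι₃ Ψ₃ hι₁ hΦ₁ hι₂ hΦ₂ hΨ₂ hι₃ hΨ₃ hΦ₁2 hΨ₃2 hc₂

end
end
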